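/- Let M be a monoid (not necessarily commutative), V : ℕ → M, and for natural numbers a, b define P a b = V a * V (a+1) * ⋯ * V (b−1), with P a b = 1 when a ≥ b. Define W : ℕ → ℕ → M by W 0 r = V r, and W (k+1) r = (if r ≥ 2^k then W k (r − 2^k) * W k r else W k r). Then for every p ≥ 1, every k with 2^k ≥ p, and every r with 0 ≤ r ≤ p − 1: W k r = P 0 (r+1), i.e., processor r holds the inclusive prefix product V 0 * V 1 * ⋯ * V r. In particular k = ⌈log₂ p⌉ rounds suffice. -/

import Mathlib

/-- The ordered product `V a * V (a+1) * ⋯ * V (b−1)` over indices in `[a, b)`,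
equal to `1` when `a ≥ b`. -/
def orderedProd {M : Type*} [Monoid M] (V : ℕ → M) (a b : ℕ) : M :=
  ((List.range' a (b - a)).map V).prod

lemma orderedProd_append {M : Type*} [Monoid M] (V : ℕ → M) {a b c : ℕ}
    (hab : a ≤ b) (hbc : b ≤ c) :
    orderedProd V a b * orderedProd V b c = orderedProd V a c := by
  unfold orderedProd
  rw [← List.prod_append, ← List.map_append]
  congr 1
  have := List.range'_append (s := a) (m := b - a) (n := c - b) (step := 1)
  simp only [one_mul, mul_one] at this
  rw [Nat.add_sub_cancel' hab] at this
  have hsum : c - a = (b - a) + (c - b) := by omega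
  rw [hsum, this]

lemma W_eq {M : Type*} [Monoid M] (V : ℕ → M) (W : ℕ → ℕ → M)
    (h0 : ∀ r, W 0 r = V r)
    (hstep : ∀ k r,
      W (k + 1) r = if 2 ^ k ≤ r then W k (r - 2 ^ k) * W k r else W k r) :
    ∀ k r, W k r = orderedProd V (r + 1 - 2 ^ k) (r + 1) := by
  intro k
  induction k with
  | zero =>
    intro r
    simp only [pow_zero, h0]
    unfold orderedProd
    have h1 : r + 1 - 1 = r := by omega
    rw [h1]
    have h2 : r + 1 - r = 1 := by omega
    rw [h2, List.range'_one, List.map_singleton, List.prod_singleton]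
  | succ k ih =>
    intro r
    rw [hstep]
    have hpow : (2:ℕ) ^ (k + 1) = 2 ^ k + 2 ^ k := by ring
    rw [hpow]
    obtain ⟨n, hn⟩ : ∃ n, (2:ℕ) ^ k = n := ⟨_, rfl⟩
    rw [hn]
    split
    · next h =>
      rw [ih, ih]
      rw [hn]
      have h1 : r - n + 1 - n = r + 1 - (n + n) := by omega
      have h2 : r - n + 1 = r + 1 - n := by omega
      rw [h1, h2]
      have ha : r + 1 - (n + n) ≤ r + 1 - n := by omega
      have hb : r + 1 - n ≤ r + 1 := by omega
      exact orderedProd_append V ha hb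
    · next h =>
      rw [ih, hn]
      congr 1
      omega

/-- Correctness of the Hillis–Steele (straight doubling) inclusive scan algorithm:
with `W 0 r = V r` and `W (k+1) r = W k (r − 2^k) * W k r` when `r ≥ 2^k` (else
unchanged), for every `p ≥ 1`, every `k` with `2^k ≥ p` and every `0 ≤ r ≤ p − 1`,
processor `r` holds its inclusive prefix product `W k r = V 0 * ⋯ * V r`; in
particular `k = ⌈log₂ p⌉` rounds suffice. -/
theorem hillis_steele_correct {M : Type*} [Monoid M] (V : ℕ → M) (W : ℕ → ℕ → M)
    (h0 : ∀ r, W 0 r = V r)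
    (hstep : ∀ k r,
      W (k + 1) r = if 2 ^ k ≤ r then W k (r - 2 ^ k) * W k r else W k r) :
    (∀ p k r, 1 ≤ p → p ≤ 2 ^ k → r ≤ p - 1 → W k r = orderedProd V 0 (r + 1)) ∧
    (∀ p r, 1 ≤ p → r ≤ p - 1 → W (Nat.clog 2 p) r = orderedProd V 0 (r + 1)) := by
  have main : ∀ p k r, 1 ≤ p → p ≤ 2 ^ k → r ≤ p - 1 →
      W k r = orderedProd V 0 (r + 1) := by
    intro p k r hp hpk hr
    rw [W_eq V W h0 hstep]
    congr 1
    omega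
  refine ⟨main, fun p r hp hr => ?_⟩
  exact main p _ r hp (Nat.le_pow_clog one_lt_two p) hr
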